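/- In the SSFS model with intersection bonus, for every n and every T ≥ 3 there exists a deterministic online algorithm that is 2/(1 − 1/(T−1))-competitive, i.e., its output sequence on every SSFS intersection-bonus instance with T time steps has value at least (1 − 1/(T−1))/2 times OPT. In particular the algorithm that at each time t chooses a feasible solution maximizing the modified profit p'_t (equal to p_1(S)+|S| at t = 1, to p_t(S)+|S ∩ S_{t−1}|+|S| for 2 ≤ t ≤ T−1, and to p_T(S)+|S ∩ S_{T−1}| at t = T) achieves this guarantee. -/

import Mathlib

/-- The value of a solution sequence under the intersection bonus: total profit
plus, for each pair of consecutive steps, the size of the intersection of the two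
solutions. -/
noncomputable def intVal (n T : ℕ) (p : ℕ → Finset (Fin n) → ℝ)
    (S : ℕ → Finset (Fin n)) : ℝ :=
  (∑ t ∈ Finset.range T, p t (S t)) +
    ∑ t ∈ Finset.range (T - 1), ((S t ∩ S (t + 1)).card : ℝ)

/-- A valid multistage instance: the empty set is feasible at every time step and
profits are nonnegative. -/
def ValidInstance (n T : ℕ) (F : ℕ → Set (Finset (Fin n)))
    (p : ℕ → Finset (Fin n) → ℝ) : Prop :=
  (∀ t, t < T → (∅ : Finset (Fin n)) ∈ F t) ∧ ∀ t, t < T → ∀ S, 0 ≤ p t S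

/-- A solution sequence: feasible at every time step. -/
def IsSol (n T : ℕ) (F : ℕ → Set (Finset (Fin n))) (S : ℕ → Finset (Fin n)) : Prop :=
  ∀ t, t < T → S t ∈ F t

/-- A deterministic online algorithm: the solution output at time `t < T` depends
only on the data `(F_s, p_s)` revealed up to time `s ≤ t`. -/
def IsOnline (n T : ℕ)
    (alg : (ℕ → Set (Finset (Fin n))) → (ℕ → Finset (Fin n) → ℝ) → ℕ → Finset (Fin n)) :
    Prop :=
  ∀ F p F' p', ∀ t, t < T →
    (∀ s, s ≤ t → F s = F' s ∧ p s = p' s) → alg F p t = alg F' p' t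

/-- The sequences produced by the modified-profit greedy algorithm `MP-Algo`
(time steps are indexed `0, …, T-1`): `S 0` maximizes `p 0 S' + |S'|`; for
`1 ≤ t ≤ T-2`, `S t` maximizes `p t S' + |S' ∩ S (t-1)| + |S'|`; and `S (T-1)`
maximizes `p (T-1) S' + |S' ∩ S (T-2)|`, each over feasible `S'`. -/
def MPGreedy (n T : ℕ) (Feas : Set (Finset (Fin n))) (p : ℕ → Finset (Fin n) → ℝ)
    (S : ℕ → Finset (Fin n)) : Prop :=
  (S 0 ∈ Feas ∧ ∀ S' ∈ Feas,
      p 0 S' + (S'.card : ℝ) ≤ p 0 (S 0) + ((S 0).card : ℝ)) ∧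
  (∀ t, 1 ≤ t → t < T - 1 → S t ∈ Feas ∧ ∀ S' ∈ Feas,
      p t S' + ((S' ∩ S (t - 1)).card : ℝ) + (S'.card : ℝ) ≤
        p t (S t) + ((S t ∩ S (t - 1)).card : ℝ) + ((S t).card : ℝ)) ∧
  (S (T - 1) ∈ Feas ∧ ∀ S' ∈ Feas,
      p (T - 1) S' + ((S' ∩ S (T - 2)).card : ℝ) ≤
        p (T - 1) (S (T - 1)) + ((S (T - 1) ∩ S (T - 2)).card : ℝ))

/-! The greedy solution `S` maximizes, at each step, the modified profit
`p'_t(Q) = p_t(Q) + |Q ∩ S_{t-1}| + |Q|` (no `|Q|` at the last step). Summing these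
optimality conditions, with total modified profit `M`, gives `M(Q) ≤ M(S) = f(S) + σ`
for every feasible sequence `Q`, where `σ = ∑_{t ≤ T-2} |S_t|`; since the intersection
bonus of `Q` is at most `∑_{t ≤ T-2} |Q_t|`, also `f(Q) ≤ M(Q)`. Three choices of `Q`:
* `Q = Ŝ` gives `f(Ŝ) ≤ f(S) + σ`;
* `Q_t = S_{t-1}` (with `Q_0 = ∅`) gives `2σ - |S_{T-2}| ≤ M(Q)`, hence `σ ≤ f(S) + |S_{T-2}|`;
* `Q_t = S_{T-2}` for all `t` gives `(T-1)|S_{T-2}| ≤ f(S) + σ`.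
Eliminating `σ` and `|S_{T-2}|` yields `(T-2) f(Ŝ) ≤ 2(T-1) f(S)`. -/

open Finset

section Argmax

variable {α β : Type*} [Nonempty α] [LinearOrder β]

noncomputable def argmaxOn (s : Set α) (g : α → β) : α :=
  Classical.epsilon fun a => a ∈ s ∧ ∀ b ∈ s, g b ≤ g a

theorem argmaxOn_spec {s : Set α} (g : α → β) (hs : s.Finite) (hne : s.Nonempty) :
    argmaxOn s g ∈ s ∧ ∀ b ∈ s, g b ≤ g (argmaxOn s g) :=
  Classical.epsilon_spec (s.exists_max_image g hs hne)

end Argmax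

theorem sum_range_ite_add_one_lt {M : Type*} [AddCommMonoid M] (T : ℕ) (f : ℕ → M) :
    ∑ t ∈ range T, (if t + 1 < T then f t else 0) = ∑ t ∈ range (T - 1), f t := by
  rw [← sum_filter]
  congr 1
  ext t
  simp only [mem_filter, mem_range]
  omega

section ModifiedProfit

variable {n T : ℕ} {p : ℕ → Finset (Fin n) → ℝ} {Feas : Set (Finset (Fin n))}
  {S : ℕ → Finset (Fin n)}

/-- The modified profit `p'_t(Q)` of `MP-Algo`, given the solution `prev` chosen at the
previous step (`∅` at `t = 0`). -/
noncomputable def modProfit (T : ℕ) (p : ℕ → Finset (Fin n) → ℝ) (t : ℕ)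
    (prev Q : Finset (Fin n)) : ℝ :=
  p t Q + ((Q ∩ prev).card : ℝ) + if t + 1 < T then (Q.card : ℝ) else 0

def prevSol (S : ℕ → Finset (Fin n)) : ℕ → Finset (Fin n)
  | 0 => ∅
  | t + 1 => S t

theorem modProfit_zero (hT : 1 < T) (Q : Finset (Fin n)) :
    modProfit T p 0 (prevSol S 0) Q = p 0 Q + Q.card := by
  simp [modProfit, prevSol, hT]

theorem modProfit_succ_of_lt {t : ℕ} (ht : t + 2 < T) (Q : Finset (Fin n)) :
    modProfit T p (t + 1) (prevSol S (t + 1)) Q = p (t + 1) Q + (Q ∩ S t).card + Q.card := by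
  simp [modProfit, prevSol, ht]

theorem modProfit_succ_of_eq {t : ℕ} (ht : t + 2 = T) (Q : Finset (Fin n)) :
    modProfit T p (t + 1) (prevSol S (t + 1)) Q = p (t + 1) Q + (Q ∩ S t).card := by
  simp [modProfit, prevSol, ← ht]

theorem mpGreedy_iff (hT : 2 ≤ T) :
    MPGreedy n T Feas p S ↔ ∀ t < T, S t ∈ Feas ∧ ∀ Q ∈ Feas,
      modProfit T p t (prevSol S t) Q ≤ modProfit T p t (prevSol S t) (S t) := by
  obtain ⟨m, rfl⟩ := Nat.exists_eq_add_of_le' hT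
  simp only [MPGreedy, show m + 2 - 1 = m + 1 by omega, show m + 2 - 2 = m by omega]
  constructor
  · rintro ⟨hfirst, hmid, hlast⟩ t ht
    rcases t with _ | t
    · simpa only [modProfit_zero (by omega : 1 < m + 2)] using hfirst
    rcases Nat.lt_or_ge (t + 2) (m + 2) with hlt | hge
    · simpa only [modProfit_succ_of_lt hlt, Nat.add_sub_cancel] using
        hmid (t + 1) (by omega) (by omega)
    · obtain rfl : t = m := by omega
      simpa only [modProfit_succ_of_eq rfl] using hlast
  · intro h
    refine ⟨?_, fun t h1 h2 => ?_, ?_⟩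
    · simpa only [modProfit_zero (by omega : 1 < m + 2)] using h 0 (by omega)
    · obtain ⟨k, rfl⟩ := Nat.exists_eq_add_of_le' h1
      simpa only [modProfit_succ_of_lt (by omega : k + 2 < m + 2), Nat.add_sub_cancel] using
        h (k + 1) (by omega)
    · simpa only [modProfit_succ_of_eq rfl] using h (m + 1) (by omega)

theorem MPGreedy.mem (hS : MPGreedy n T Feas p S) {t : ℕ} (ht : t < T) : S t ∈ Feas := by
  rcases Nat.eq_zero_or_pos t with rfl | h1
  · exact hS.1.1
  rcases Nat.lt_or_ge t (T - 1) with h2 | h2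
  · exact (hS.2.1 t h1 h2).1
  · obtain rfl : t = T - 1 := by omega
    exact hS.2.2.1

end ModifiedProfit

section Algorithm

variable {n : ℕ}

noncomputable def mpAlg (T : ℕ) (F : ℕ → Set (Finset (Fin n))) (p : ℕ → Finset (Fin n) → ℝ) :
    ℕ → Finset (Fin n)
  | 0 => argmaxOn (F 0) (modProfit T p 0 ∅)
  | t + 1 => argmaxOn (F (t + 1)) (modProfit T p (t + 1) (mpAlg T F p t))

theorem mpAlg_eq (T : ℕ) (F : ℕ → Set (Finset (Fin n))) (p : ℕ → Finset (Fin n) → ℝ) (t : ℕ) :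
    mpAlg T F p t = argmaxOn (F t) (modProfit T p t (prevSol (mpAlg T F p) t)) := by
  cases t <;> rfl

theorem mpAlg_congr {T : ℕ} {F F' : ℕ → Set (Finset (Fin n))} {p p' : ℕ → Finset (Fin n) → ℝ}
    {t : ℕ} (h : ∀ s ≤ t, F s = F' s ∧ p s = p' s) : mpAlg T F p t = mpAlg T F' p' t := by
  have hmod : ∀ s ≤ t, modProfit T p s = modProfit T p' s := fun s hs => by
    funext prev Q
    rw [modProfit, modProfit, (h s hs).2]
  induction t with
  | zero => simp only [mpAlg, (h 0 le_rfl).1, hmod 0 le_rfl]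
  | succ t ih =>
    simp only [mpAlg, (h (t + 1) le_rfl).1, hmod (t + 1) le_rfl,
      ih (fun s hs => h s (by omega)) fun s hs => hmod s (by omega)]

theorem isOnline_mpAlg (T : ℕ) : IsOnline n T (mpAlg T) :=
  fun _ _ _ _ _ _ h => mpAlg_congr h

theorem mpGreedy_mpAlg {T : ℕ} (hT : 2 ≤ T) {Feas : Set (Finset (Fin n))}
    (p : ℕ → Finset (Fin n) → ℝ) (hne : Feas.Nonempty) :
    MPGreedy n T Feas p (mpAlg T (fun _ => Feas) p) :=
  (mpGreedy_iff hT).2 fun t _ => by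
    rw [mpAlg_eq]
    exact argmaxOn_spec _ (Set.toFinite Feas) hne

end Algorithm

section Competitive

variable {n T : ℕ} {p : ℕ → Finset (Fin n) → ℝ} {Feas : Set (Finset (Fin n))}
  {S Q : ℕ → Finset (Fin n)}

noncomputable def totalModProfit (T : ℕ) (p : ℕ → Finset (Fin n) → ℝ)
    (S Q : ℕ → Finset (Fin n)) : ℝ :=
  ∑ t ∈ range T, modProfit T p t (prevSol S t) (Q t)

theorem totalModProfit_eq (T : ℕ) (p : ℕ → Finset (Fin n) → ℝ) (S Q : ℕ → Finset (Fin n)) :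
    totalModProfit T p S Q = ∑ t ∈ range T, p t (Q t) +
      ∑ t ∈ range (T - 1), ((Q (t + 1) ∩ S t).card : ℝ) +
      ∑ t ∈ range (T - 1), ((Q t).card : ℝ) := by
  have hbonus : ∑ t ∈ range T, ((Q t ∩ prevSol S t).card : ℝ) =
      ∑ t ∈ range (T - 1), ((Q (t + 1) ∩ S t).card : ℝ) := by
    cases T <;> simp [sum_range_succ', prevSol]
  simp only [totalModProfit, modProfit, sum_add_distrib, hbonus, sum_range_ite_add_one_lt]

theorem totalModProfit_self (T : ℕ) (p : ℕ → Finset (Fin n) → ℝ) (S : ℕ → Finset (Fin n)) :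
    totalModProfit T p S S = intVal n T p S + ∑ t ∈ range (T - 1), ((S t).card : ℝ) := by
  simp only [totalModProfit_eq, intVal, inter_comm]

theorem intVal_le_totalModProfit (T : ℕ) (p : ℕ → Finset (Fin n) → ℝ)
    (S Q : ℕ → Finset (Fin n)) : intVal n T p Q ≤ totalModProfit T p S Q := by
  have hbonus : ∑ t ∈ range (T - 1), ((Q t ∩ Q (t + 1)).card : ℝ) ≤
      ∑ t ∈ range (T - 1), ((Q t).card : ℝ) :=
    sum_le_sum fun t _ => by exact_mod_cast card_le_card inter_subset_left
  have hnonneg : 0 ≤ ∑ t ∈ range (T - 1), ((Q (t + 1) ∩ S t).card : ℝ) :=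
    sum_nonneg fun t _ => Nat.cast_nonneg _
  rw [intVal, totalModProfit_eq]
  linarith

theorem MPGreedy.totalModProfit_le (hT : 2 ≤ T) (hS : MPGreedy n T Feas p S)
    (hQ : IsSol n T (fun _ => Feas) Q) : totalModProfit T p S Q ≤ totalModProfit T p S S :=
  sum_le_sum fun t ht => ((mpGreedy_iff hT).1 hS t (mem_range.1 ht)).2 _ (hQ t (mem_range.1 ht))

theorem MPGreedy.intVal_le (hT : 2 ≤ T) (hS : MPGreedy n T Feas p S)
    (hQ : IsSol n T (fun _ => Feas) Q) :
    intVal n T p Q ≤ intVal n T p S + ∑ t ∈ range (T - 1), ((S t).card : ℝ) :=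
  totalModProfit_self T p S ▸
    (intVal_le_totalModProfit T p S Q).trans (hS.totalModProfit_le hT hQ)

theorem MPGreedy.sum_card_le (hT : 2 ≤ T) (hvalid : ValidInstance n T (fun _ => Feas) p)
    (hS : MPGreedy n T Feas p S) :
    ∑ t ∈ range (T - 1), ((S t).card : ℝ) ≤ intVal n T p S + (S (T - 2)).card := by
  have hfeas : IsSol n T (fun _ => Feas) (prevSol S) := fun t ht => by
    cases t with
    | zero => exact hvalid.1 0 ht
    | succ t => exact hS.mem (by omega)
  have hprofit : 0 ≤ ∑ t ∈ range T, p t (prevSol S t) :=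
    sum_nonneg fun t ht => hvalid.2 t (mem_range.1 ht) _
  have hshift : ∑ t ∈ range (T - 1), ((prevSol S t).card : ℝ) =
      ∑ t ∈ range (T - 2), ((S t).card : ℝ) := by
    obtain ⟨m, rfl⟩ := Nat.exists_eq_add_of_le' hT
    simp [sum_range_succ', prevSol]
  have hlast : ∑ t ∈ range (T - 1), ((S t).card : ℝ) =
      ∑ t ∈ range (T - 2), ((S t).card : ℝ) + (S (T - 2)).card := by
    rw [show T - 1 = T - 2 + 1 by omega, sum_range_succ]
  have hle := hS.totalModProfit_le hT hfeas
  simp only [totalModProfit_self, totalModProfit_eq, prevSol.eq_2, inter_self, hshift] at hle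
  linarith

theorem MPGreedy.card_le (hT : 2 ≤ T) (hvalid : ValidInstance n T (fun _ => Feas) p)
    (hS : MPGreedy n T Feas p S) :
    ((T : ℝ) - 1) * (S (T - 2)).card ≤
      intVal n T p S + ∑ t ∈ range (T - 1), ((S t).card : ℝ) := by
  have hconst := hS.intVal_le hT (Q := fun _ => S (T - 2)) fun _ _ => hS.mem (by omega)
  have hprofit : 0 ≤ ∑ t ∈ range T, p t (S (T - 2)) :=
    sum_nonneg fun t ht => hvalid.2 t (mem_range.1 ht) _
  simp only [intVal, inter_self, sum_const, card_range, nsmul_eq_mul,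
    Nat.cast_sub (by omega : 1 ≤ T), Nat.cast_one] at hconst ⊢
  linarith

theorem half_one_sub_inv_mul_le {A f x c : ℝ} (hc : 1 < c) (hf : f ≤ 2 * A + x)
    (hx : (c - 1) * x ≤ 2 * A) : (1 - 1 / c) / 2 * f ≤ A := by
  have hc0 : 0 < c := by linarith
  have hcoef : (1 - 1 / c) / 2 = (c - 1) / (2 * c) := by field_simp
  rw [hcoef, div_mul_eq_mul_div, div_le_iff₀ (by positivity)]
  nlinarith [mul_le_mul_of_nonneg_left hf (by linarith : 0 ≤ c - 1)]

theorem MPGreedy.competitive (hT : 3 ≤ T) (hvalid : ValidInstance n T (fun _ => Feas) p)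
    (hS : MPGreedy n T Feas p S) (hQ : IsSol n T (fun _ => Feas) Q) :
    (1 - 1 / ((T : ℝ) - 1)) / 2 * intVal n T p Q ≤ intVal n T p S := by
  have hT2 : 2 ≤ T := by omega
  have hQS := hS.intVal_le hT2 hQ
  have hsum := hS.sum_card_le hT2 hvalid
  have hcard := hS.card_le hT2 hvalid
  have hc : (1 : ℝ) < T - 1 := by
    have : (3 : ℝ) ≤ T := by exact_mod_cast hT
    linarith
  exact half_one_sub_inv_mul_le (x := (S (T - 2)).card) hc (by linarith) (by linarith)

end Competitive

/-- In the SSFS model with intersection bonus, for every `n` and every `T ≥ 3`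
there is a deterministic online algorithm that is `2/(1 - 1/(T-1))`-competitive,
i.e. its output sequence on every SSFS instance has value at least
`(1 - 1/(T-1))/2` times OPT; in particular, any sequence satisfying the
modified-profit greedy conditions (`MP-Algo`) achieves this guarantee. -/
theorem stmt3 (n T : ℕ) (hT : 3 ≤ T) :
    (∃ alg : (ℕ → Set (Finset (Fin n))) → (ℕ → Finset (Fin n) → ℝ) → ℕ → Finset (Fin n),
      IsOnline n T alg ∧
      ∀ (Feas : Set (Finset (Fin n))) (p : ℕ → Finset (Fin n) → ℝ),
        ValidInstance n T (fun _ => Feas) p →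
        (∀ t, t < T → alg (fun _ => Feas) p t ∈ Feas) ∧
        ∀ S : ℕ → Finset (Fin n), IsSol n T (fun _ => Feas) S →
          (1 - 1 / ((T : ℝ) - 1)) / 2 * intVal n T p S ≤
            intVal n T p (alg (fun _ => Feas) p)) ∧
    ∀ (Feas : Set (Finset (Fin n))) (p : ℕ → Finset (Fin n) → ℝ),
      ValidInstance n T (fun _ => Feas) p →
      ∀ S : ℕ → Finset (Fin n), MPGreedy n T Feas p S →
        ∀ Shat : ℕ → Finset (Fin n), IsSol n T (fun _ => Feas) Shat →
          (1 - 1 / ((T : ℝ) - 1)) / 2 * intVal n T p Shat ≤ intVal n T p S := by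
  refine ⟨⟨mpAlg T, isOnline_mpAlg T, fun Feas p hvalid => ?_⟩,
    fun _ _ hvalid _ hS _ hShat => hS.competitive hT hvalid hShat⟩
  have hS := mpGreedy_mpAlg (by omega : 2 ≤ T) p ⟨∅, hvalid.1 0 (by omega)⟩
  exact ⟨fun t ht => hS.mem ht, fun _ hQ => hS.competitive hT hvalid hQ⟩
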